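/- arXiv:2603.19927 — 2 statements merged into one kernel-verified Lean document; each statement's English description precedes it below -/
import Mathlib

section
/- Let n, m ≥ 5. Then the ratio p_{n,m}(A_x, B_x) / tr(A_x^n · B_x^m) tends to +∞ as x → 0⁺; that is, for every C > 0 there exists δ > 0 such that for all x with 0 < x < δ one has p_{n,m}(A_x, B_x) > C · tr(A_x^n · B_x^m). -/
open Matrix

/-- The matrix `A_x`. -/
def Amat (x : ℝ) : Matrix (Fin 3) (Fin 3) ℝ :=
  !![1, 0, 0; 0, x, -x; 0, -x, x]

/-- The matrix `B_x`. -/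
def Bmat (x : ℝ) : Matrix (Fin 3) (Fin 3) ℝ :=
  !![x, -x, 0; -x, x, 0; 0, 0, 1]

/-- The (finite) set `𝒲_{n,m}` of words with exactly `n` letters `A` (`true`)
and `m` letters `B` (`false`). -/
def words (n m : ℕ) : Finset (List Bool) :=
  (List.replicate n true ++ List.replicate m false).permutations.toFinset

/-- `tr w(A_x, B_x)`: the trace of the word `w` evaluated at `(A_x, B_x)`. -/
noncomputable def wtr (x : ℝ) (w : List Bool) : ℝ :=
  ((w.map fun b => if b = true then Amat x else Bmat x).prod).trace

/-- The averaged word trace `p_{n,m}(A_x, B_x)`. -/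
noncomputable def pnm (n m : ℕ) (x : ℝ) : ℝ :=
  (1 / ((n + m).choose n)) * ∑ w ∈ words n m, wtr x w

/-!
Conjugation by `diag(1, -1, 1)` turns `A_x` and `B_x` into entrywise nonnegative matrices for
`x ≥ 0`, so every word trace is nonnegative and `p_{n,m}` is at least `1 / binom(n+m, n)` times
the trace of any single word. Since `A_x A_y = A_{2xy}` and `B_x B_y = B_{2xy}`, powers stay in
these families and `tr(A_a B_b) = a + b + ab`, which makes `tr(A_x^n B_x^m) = O(x^5)`. On the
other hand, `A_x^k → E₁₁` and `B_x^k → E₃₃` as `x → 0`, and the word `A^(n-2) B A B^(m-2) A B`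
joins these two corners through four letters of size `x`: its trace is at least `x^4`.
-/

section Conjugation

variable {M : Type*} [Monoid M] {D : M}

theorem List.prod_map_conj_of_mul_self_eq_one (hD : D * D = 1) (l : List M) :
    (l.map (D * · * D)).prod = D * l.prod * D := by
  induction l with
  | nil => simp [hD]
  | cons a l ih =>
    rw [List.map_cons, List.prod_cons, ih, List.prod_cons]
    calc D * a * D * (D * l.prod * D) = D * a * (D * D) * l.prod * D := by simp only [mul_assoc]
      _ = D * (a * l.prod) * D := by rw [hD, mul_one, mul_assoc D a]

end Conjugation

namespace Matrix

variable {n R : Type*} [Fintype n] [DecidableEq n]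

theorem trace_conj_of_mul_self_eq_one [CommSemiring R] {D : Matrix n n R} (hD : D * D = 1)
    (A : Matrix n n R) : (D * A * D).trace = A.trace := by
  rw [trace_mul_cycle, hD, one_mul]

variable (n R) [Semiring R] [PartialOrder R] [IsOrderedRing R]

def nonnegSubmonoid : Submonoid (Matrix n n R) where
  carrier := {A | ∀ i j, 0 ≤ A i j}
  mul_mem' {A B} hA hB i j := Finset.sum_nonneg fun k _ => mul_nonneg (hA i k) (hB k j)
  one_mem' i j := by
    rw [one_apply]
    split_ifs <;> simp

variable {n R}

theorem trace_nonneg_of_mem_nonnegSubmonoid {A : Matrix n n R} (hA : A ∈ nonnegSubmonoid n R) :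
    0 ≤ A.trace :=
  Finset.sum_nonneg fun i _ => hA i i

end Matrix

theorem Amat_mul_Amat (x y : ℝ) : Amat x * Amat y = Amat (2 * x * y) := by
  ext i j
  fin_cases i <;> fin_cases j <;> simp [Amat] <;> ring

theorem Bmat_mul_Bmat (x y : ℝ) : Bmat x * Bmat y = Bmat (2 * x * y) := by
  ext i j
  fin_cases i <;> fin_cases j <;> simp [Bmat] <;> ring

theorem Amat_pow_succ (x : ℝ) (k : ℕ) : Amat x ^ (k + 1) = Amat (2 ^ k * x ^ (k + 1)) := by
  induction k with
  | zero => simp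
  | succ k ih => rw [pow_succ, ih, Amat_mul_Amat]; ring_nf

theorem Bmat_pow_succ (x : ℝ) (k : ℕ) : Bmat x ^ (k + 1) = Bmat (2 ^ k * x ^ (k + 1)) := by
  induction k with
  | zero => simp
  | succ k ih => rw [pow_succ, ih, Bmat_mul_Bmat]; ring_nf

theorem trace_Amat_mul_Bmat (a b : ℝ) : (Amat a * Bmat b).trace = a + b + a * b := by
  simp [Amat, Bmat, trace_fin_three]
  ring

theorem trace_Amat_pow_mul_Bmat_pow_le {x : ℝ} (hx₀ : 0 ≤ x) (hx₁ : x ≤ 1) {d n m : ℕ}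
    (hd : 0 < d) (hn : d ≤ n) (hm : d ≤ m) :
    (Amat x ^ n * Bmat x ^ m).trace ≤ 3 * 2 ^ (n + m) * x ^ d := by
  obtain ⟨k, rfl⟩ : ∃ k, n = k + 1 := ⟨n - 1, by omega⟩
  obtain ⟨l, rfl⟩ : ∃ l, m = l + 1 := ⟨m - 1, by omega⟩
  rw [Amat_pow_succ, Bmat_pow_succ, trace_Amat_mul_Bmat]
  have h2 {e : ℕ} (he : e ≤ k + 1 + (l + 1)) : (2 : ℝ) ^ e ≤ 2 ^ (k + 1 + (l + 1)) :=
    pow_le_pow_right₀ one_le_two he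
  have hx {e : ℕ} (he : d ≤ e) : x ^ e ≤ x ^ d := pow_le_pow_of_le_one hx₀ hx₁ he
  have ha : 2 ^ k * x ^ (k + 1) ≤ 2 ^ (k + 1 + (l + 1)) * x ^ d :=
    mul_le_mul (h2 (by omega)) (hx hn) (by positivity) (by positivity)
  have hb : 2 ^ l * x ^ (l + 1) ≤ 2 ^ (k + 1 + (l + 1)) * x ^ d :=
    mul_le_mul (h2 (by omega)) (hx hm) (by positivity) (by positivity)
  have hab : 2 ^ k * x ^ (k + 1) * (2 ^ l * x ^ (l + 1)) ≤ 2 ^ (k + 1 + (l + 1)) * x ^ d := by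
    rw [mul_mul_mul_comm, ← pow_add, ← pow_add]
    exact mul_le_mul (h2 (by omega)) (hx (by omega)) (by positivity) (by positivity)
  linarith

def signFlip : Matrix (Fin 3) (Fin 3) ℝ := diagonal ![1, -1, 1]

theorem signFlip_mul_self : signFlip * signFlip = 1 := by
  rw [signFlip, diagonal_mul_diagonal, ← diagonal_one]
  congr 1
  ext i
  fin_cases i <;> simp

theorem signFlip_conj_Amat (x : ℝ) :
    signFlip * Amat x * signFlip = !![1, 0, 0; 0, x, x; 0, x, x] := by
  ext i j
  fin_cases i <;> fin_cases j <;> simp [signFlip, Amat]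

theorem signFlip_conj_Bmat (x : ℝ) :
    signFlip * Bmat x * signFlip = !![x, x, 0; x, x, 0; 0, 0, 1] := by
  ext i j
  fin_cases i <;> fin_cases j <;> simp [signFlip, Bmat]

theorem signFlip_conj_mem_nonnegSubmonoid {x : ℝ} (hx : 0 ≤ x) (b : Bool) :
    signFlip * (if b = true then Amat x else Bmat x) * signFlip ∈ nonnegSubmonoid (Fin 3) ℝ := by
  intro i j
  cases b <;> fin_cases i <;> fin_cases j <;> simp [signFlip_conj_Amat, signFlip_conj_Bmat, hx]

theorem wtr_nonneg {x : ℝ} (hx : 0 ≤ x) (w : List Bool) : 0 ≤ wtr x w := by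
  rw [wtr, ← trace_conj_of_mul_self_eq_one signFlip_mul_self,
    ← List.prod_map_conj_of_mul_self_eq_one signFlip_mul_self, List.map_map]
  refine trace_nonneg_of_mem_nonnegSubmonoid (Submonoid.list_prod_mem _ ?_)
  simp only [List.mem_map, Function.comp_apply]
  rintro _ ⟨b, -, rfl⟩
  exact signFlip_conj_mem_nonnegSubmonoid hx b

def witnessWord (k l : ℕ) : List Bool :=
  List.replicate (k + 1) true ++ [false, true] ++ List.replicate (l + 1) false ++ [true, false]

theorem witnessWord_mem_words (k l : ℕ) : witnessWord k l ∈ words (k + 3) (l + 3) := by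
  rw [words, List.mem_toFinset, List.mem_permutations, List.perm_iff_count]
  intro b
  cases b <;> simp [witnessWord, List.count_replicate]

theorem trace_witnessProduct (a b x : ℝ) :
    (Amat a * Bmat x * Amat x * Bmat b * Amat x * Bmat x).trace =
      x ^ 4 + (a + b) * (x * (1 + x)) ^ 2 + a * b * (x * (2 + x)) ^ 2 := by
  simp [Amat, Bmat, trace_fin_three]
  ring

theorem pow_four_le_wtr_witnessWord {x : ℝ} (hx : 0 ≤ x) (k l : ℕ) :
    x ^ 4 ≤ wtr x (witnessWord k l) := by
  simp only [wtr, witnessWord, List.map_append, List.map_replicate, List.prod_append,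
    List.prod_replicate, List.map_cons, List.map_nil, List.prod_cons, List.prod_nil,
    Bool.false_eq_true, if_true, if_false, mul_one, Amat_pow_succ, Bmat_pow_succ, ← mul_assoc,
    trace_witnessProduct, add_assoc]
  exact le_add_of_nonneg_right (by positivity)

theorem pow_four_div_choose_le_pnm {n m : ℕ} (hn : 3 ≤ n) (hm : 3 ≤ m) {x : ℝ} (hx : 0 ≤ x) :
    x ^ 4 / (n + m).choose n ≤ pnm n m x := by
  obtain ⟨k, rfl⟩ : ∃ k, n = k + 3 := ⟨n - 3, by omega⟩
  obtain ⟨l, rfl⟩ : ∃ l, m = l + 3 := ⟨m - 3, by omega⟩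
  rw [pnm, one_div_mul_eq_div]
  gcongr
  exact (pow_four_le_wtr_witnessWord hx k l).trans
    (Finset.single_le_sum (fun w _ => wtr_nonneg hx w) (witnessWord_mem_words k l))

theorem stmt_12 (n m : ℕ) (hn : 5 ≤ n) (hm : 5 ≤ m) :
    ∀ C : ℝ, 0 < C → ∃ δ : ℝ, 0 < δ ∧ ∀ x : ℝ, 0 < x → x < δ →
      C * (Amat x ^ n * Bmat x ^ m).trace < pnm n m x := by
  intro C hC
  set c : ℝ := Nat.cast ((n + m).choose n)
  set K : ℝ := 3 * 2 ^ (n + m)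
  have hc : 0 < c := Nat.cast_pos.mpr (Nat.choose_pos (by omega))
  refine ⟨min 1 (1 / (C * K * c)), by positivity, fun x hx hxδ => ?_⟩
  have hsmall : C * K * c * x < 1 := by
    have := hxδ.trans_le (min_le_right _ _)
    rw [lt_div_iff₀ (by positivity)] at this
    linarith
  calc C * (Amat x ^ n * Bmat x ^ m).trace
      ≤ C * (K * x ^ 5) := by
        gcongr
        exact trace_Amat_pow_mul_Bmat_pow_le hx.le (hxδ.trans_le (min_le_left _ _)).le
          (by norm_num) hn hm
    _ = C * K * c * x * (x ^ 4 / c) := by field_simp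
    _ < 1 * (x ^ 4 / c) := by gcongr
    _ ≤ pnm n m x := by
      rw [one_mul]
      exact pow_four_div_choose_le_pnm (by omega) (by omega) hx.le
end

section
/- The polynomial ∑_{w ∈ 𝒲_{5,5}} T(w) ∈ ℝ[X] equals 2X⁴·(4881X⁶ + 5930X⁵ + 4875X⁴ + 3130X³ + 1675X² + 1422X + 5). Equivalently, p_{5,5}(A_x, B_x) = (x⁴/126)·(5 + 1422x + 1675x² + 3130x³ + 4875x⁴ + 5930x⁵ + 4881x⁶) for every real x. -/
open Matrix Polynomial

/-- The polynomial matrix `𝔸`. -/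
noncomputable def Apoly : Matrix (Fin 3) (Fin 3) (Polynomial ℝ) :=
  !![1, 0, 0; 0, X, -X; 0, -X, X]

/-- The polynomial matrix `𝔹`. -/
noncomputable def Bpoly : Matrix (Fin 3) (Fin 3) (Polynomial ℝ) :=
  !![X, -X, 0; -X, X, 0; 0, 0, 1]

/-- The word trace polynomial `T(w)`. -/
noncomputable def T (w : List Bool) : Polynomial ℝ :=
  ((w.map fun b => if b = true then Apoly else Bpoly).prod).trace

/-
Splitting a word at its first letter gives a Pascal-type recursion for the sum of the word
products over `𝒲_{n,m}`. The entries of `𝔸` and `𝔹` have degree at most one, so the trace of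
the sum over `𝒲_{5,5}` is a polynomial of degree at most 10 and is determined by its values at
`x = 0, …, 10`. There `𝔸` and `𝔹` are integer matrices, and the kernel evaluates the recursion
exactly.
-/

section WordSums

variable {R S : Type*} [Semiring R] [Semiring S]

def wordProd (a b : R) (w : List Bool) : R :=
  (w.map fun x => if x = true then a else b).prod

@[simp]
theorem wordProd_cons (a b : R) (x : Bool) (w : List Bool) :
    wordProd a b (x :: w) = (if x = true then a else b) * wordProd a b w :=
  List.prod_cons

/-- The sum of `wordProd a b w` over the words of length `L` with `n` letters `a`
(`sum_words_wordProd`). Indexing by the length makes the recursion structural, so that the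
kernel can evaluate it. -/
def wordSum (a b : R) : ℕ → ℕ → R
  | 0, n => if n = 0 then 1 else 0
  | L + 1, 0 => b * wordSum a b L 0
  | L + 1, n + 1 => a * wordSum a b L n + b * wordSum a b L (n + 1)

theorem wordSum_eq_zero_of_lt (a b : R) : ∀ {L n : ℕ}, L < n → wordSum a b L n = 0
  | 0, n, h => if_neg (by omega)
  | L + 1, n + 1, h => by
    rw [wordSum, wordSum_eq_zero_of_lt a b (by omega), wordSum_eq_zero_of_lt a b (by omega)]
    simp

theorem map_wordSum (f : R →+* S) (a b : R) :
    ∀ L n, f (wordSum a b L n) = wordSum (f a) (f b) L n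
  | 0, n => by simp only [wordSum]; split_ifs <;> simp
  | L + 1, 0 => by simp only [wordSum, map_mul, map_wordSum f a b L]
  | L + 1, n + 1 => by simp only [wordSum, map_add, map_mul, map_wordSum f a b L]

theorem mem_words {n m : ℕ} {w : List Bool} :
    w ∈ words n m ↔ w.count true = n ∧ w.count false = m := by
  rw [words, List.mem_toFinset, List.mem_permutations, List.perm_iff_count]
  constructor
  · intro h
    exact ⟨by simpa [List.count_replicate] using h true,
      by simpa [List.count_replicate] using h false⟩
  · rintro ⟨rfl, rfl⟩ (_ | _) <;> simp [List.count_replicate]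

theorem words_zero_zero : words 0 0 = {[]} := by
  ext (_ | ⟨_ | _, w⟩) <;> simp [mem_words]

theorem words_succ_zero (n : ℕ) : words (n + 1) 0 = (words n 0).image (List.cons true) := by
  ext (_ | ⟨_ | _, w⟩) <;> simp [mem_words]

theorem words_zero_succ (m : ℕ) : words 0 (m + 1) = (words 0 m).image (List.cons false) := by
  ext (_ | ⟨_ | _, w⟩) <;> simp [mem_words]

theorem words_succ_succ (n m : ℕ) :
    words (n + 1) (m + 1) =
      (words n (m + 1)).image (List.cons true) ∪ (words (n + 1) m).image (List.cons false) := by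
  ext (_ | ⟨_ | _, w⟩) <;> simp [mem_words]

theorem sum_words_wordProd (a b : R) :
    ∀ n m, ∑ w ∈ words n m, wordProd a b w = wordSum a b (n + m) n
  | 0, 0 => by simp [words_zero_zero, wordProd, wordSum]
  | n + 1, 0 => by
    rw [words_succ_zero, Finset.sum_image (fun _ _ _ _ h => List.cons_injective h)]
    simp [← Finset.mul_sum, sum_words_wordProd a b n 0, wordSum,
      wordSum_eq_zero_of_lt a b (Nat.lt_succ_self n)]
  | 0, m + 1 => by
    rw [words_zero_succ, Finset.sum_image (fun _ _ _ _ h => List.cons_injective h)]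
    simp [← Finset.mul_sum, sum_words_wordProd a b 0 m, wordSum]
  | n + 1, m + 1 => by
    rw [words_succ_succ, Finset.sum_union,
      Finset.sum_image (fun _ _ _ _ h => List.cons_injective h),
      Finset.sum_image (fun _ _ _ _ h => List.cons_injective h)]
    · simp only [wordProd_cons, if_true, ← Finset.mul_sum, sum_words_wordProd a b n (m + 1),
        sum_words_wordProd a b (n + 1) m]
      rw [show n + 1 + (m + 1) = n + (m + 1) + 1 by omega, wordSum,
        show n + (m + 1) = n + 1 + m by omega]
      rfl
    · simp [Finset.disjoint_left]

end WordSums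

theorem natDegree_mul_apply_le {ι R : Type*} [Fintype ι] [Semiring R]
    {M N : Matrix ι ι R[X]} {p q : ℕ}
    (hM : ∀ i j, (M i j).natDegree ≤ p) (hN : ∀ i j, (N i j).natDegree ≤ q) (i j : ι) :
    ((M * N) i j).natDegree ≤ p + q :=
  natDegree_sum_le_of_forall_le _ _ fun l _ => natDegree_mul_le_of_le (hM i l) (hN l j)

section PolynomialMatrices

variable {ι R : Type*} [Fintype ι] [DecidableEq ι] [Semiring R]

theorem natDegree_wordSum_apply_le {a b : Matrix ι ι R[X]}
    (ha : ∀ i j, (a i j).natDegree ≤ 1) (hb : ∀ i j, (b i j).natDegree ≤ 1) :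
    ∀ L n i j, (wordSum a b L n i j).natDegree ≤ L
  | 0, n, i, j => by
    simp only [wordSum]
    split_ifs <;> simp [Matrix.one_apply, apply_ite]
  | L + 1, 0, i, j => by
    rw [wordSum, add_comm L]
    exact natDegree_mul_apply_le hb (natDegree_wordSum_apply_le ha hb L 0) i j
  | L + 1, n + 1, i, j => by
    rw [wordSum, Matrix.add_apply, add_comm L]
    exact natDegree_add_le_of_degree_le
      (natDegree_mul_apply_le ha (natDegree_wordSum_apply_le ha hb L n) i j)
      (natDegree_mul_apply_le hb (natDegree_wordSum_apply_le ha hb L (n + 1)) i j)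

theorem natDegree_trace_wordSum_le {a b : Matrix ι ι R[X]}
    (ha : ∀ i j, (a i j).natDegree ≤ 1) (hb : ∀ i j, (b i j).natDegree ≤ 1) (L n : ℕ) :
    (wordSum a b L n).trace.natDegree ≤ L :=
  natDegree_sum_le_of_forall_le _ _ fun i _ => natDegree_wordSum_apply_le ha hb L n i i

end PolynomialMatrices

theorem RingHom.map_trace_wordSum {ι R S : Type*} [Fintype ι] [DecidableEq ι] [Semiring R]
    [Semiring S] (f : R →+* S) (a b : Matrix ι ι R) (L n : ℕ) :
    f (wordSum a b L n).trace = (wordSum (f.mapMatrix a) (f.mapMatrix b) L n).trace := by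
  rw [AddMonoidHom.map_trace f]
  exact congrArg Matrix.trace (map_wordSum f.mapMatrix a b L n)

section MatricesAB

variable {R S : Type*} [Ring R] [Ring S]

-- `Apoly = matA X` and `Bpoly = matB X` hold by `rfl`.
def matA (x : R) : Matrix (Fin 3) (Fin 3) R := !![1, 0, 0; 0, x, -x; 0, -x, x]

def matB (x : R) : Matrix (Fin 3) (Fin 3) R := !![x, -x, 0; -x, x, 0; 0, 0, 1]

theorem RingHom.mapMatrix_matA (f : R →+* S) (x : R) : f.mapMatrix (matA x) = matA (f x) := by
  ext i j
  fin_cases i <;> fin_cases j <;> simp [matA]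

theorem RingHom.mapMatrix_matB (f : R →+* S) (x : R) : f.mapMatrix (matB x) = matB (f x) := by
  ext i j
  fin_cases i <;> fin_cases j <;> simp [matB]

theorem natDegree_matA_X_apply_le (i j : Fin 3) :
    (matA (X : R[X]) i j).natDegree ≤ 1 := by
  fin_cases i <;> fin_cases j <;> simp [matA, natDegree_X_le]

theorem natDegree_matB_X_apply_le (i j : Fin 3) :
    (matB (X : R[X]) i j).natDegree ≤ 1 := by
  fin_cases i <;> fin_cases j <;> simp [matB, natDegree_X_le]

theorem Int.cast_trace_wordSum_matA_matB (k : ℤ) (L n : ℕ) :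
    ((wordSum (matA k) (matB k) L n).trace : R) =
      (wordSum (matA (k : R)) (matB (k : R)) L n).trace := by
  rw [← eq_intCast (Int.castRingHom R), RingHom.map_trace_wordSum, RingHom.mapMatrix_matA,
    RingHom.mapMatrix_matB, eq_intCast]

end MatricesAB

theorem eval_trace_wordSum_matA_X_matB_X {R : Type*} [CommRing R] (x : R) (L n : ℕ) :
    (wordSum (matA (X : R[X])) (matB X) L n).trace.eval x =
      (wordSum (matA x) (matB x) L n).trace := by
  rw [← coe_evalRingHom, RingHom.map_trace_wordSum, RingHom.mapMatrix_matA,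
    RingHom.mapMatrix_matB, coe_evalRingHom, eval_X]

theorem stmt_13 :
    ∑ w ∈ words 5 5, T w =
      2 * X ^ 4 *
        (4881 * X ^ 6 + 5930 * X ^ 5 + 4875 * X ^ 4 + 3130 * X ^ 3 + 1675 * X ^ 2 +
          1422 * X + 5) := by
  have hsum :
      ∑ w ∈ words 5 5, T w = (wordSum (matA (X : ℝ[X])) (matB X) (5 + 5) 5).trace := by
    rw [← sum_words_wordProd, Matrix.trace_sum]
    rfl
  have hval : ∀ k : Fin 11, (wordSum (matA (k : ℤ)) (matB (k : ℤ)) (5 + 5) 5).trace =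
      2 * (k : ℤ) ^ 4 * (4881 * (k : ℤ) ^ 6 + 5930 * (k : ℤ) ^ 5 + 4875 * (k : ℤ) ^ 4 +
        3130 * (k : ℤ) ^ 3 + 1675 * (k : ℤ) ^ 2 + 1422 * (k : ℤ) + 5) := by
    decide +kernel
  rw [hsum]
  refine eq_of_natDegree_lt_card_of_eval_eq _ _ (f := fun k : Fin 11 => ((k : ℕ) : ℝ))
    (Nat.cast_injective.comp Fin.val_injective) (fun k => ?_) ?_
  · have hk := Int.cast_trace_wordSum_matA_matB (R := ℝ) (k : ℕ) (5 + 5) 5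
    rw [hval k, Int.cast_natCast] at hk
    rw [eval_trace_wordSum_matA_X_matB_X, ← hk]
    simp
  · rw [Fintype.card_fin]
    refine max_lt ((natDegree_trace_wordSum_le natDegree_matA_X_apply_le
      natDegree_matB_X_apply_le (5 + 5) 5).trans_lt (by norm_num))
      ((?_ : _ ≤ 10).trans_lt (by norm_num))
    compute_degree!
end
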